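/- arXiv:1802.04412 — 2 statements merged into one kernel-verified Lean document; each statement's English description precedes it below -/
import Mathlib

section
/- Let λ > 0 and φ₁,…,φ_T ∈ ℝ^d with ‖φ_t‖₂² ≤ L² for all t. Define V₀ = λI and V_t = V_{t-1} + φ_t φ_tᵀ. Then ∑_{t=1}^T log(1 + φ_tᵀ V_{t-1}⁻¹ φ_t) ≤ d · log(λ + T L²/d) - d·log λ. -/
open Finset Matrix

/-!
By the matrix determinant lemma, the `t`-th summand is `log det V_{t+1} - log det V_t`, so the
sum telescopes to `log det V_T - d log λ`. AM-GM on the eigenvalues of `V_T` bounds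
`log det V_T` by `d log (tr V_T / d)`, and `tr V_T = dλ + ∑ ‖φ_t‖² ≤ dλ + T L²`.
-/

theorem Real.sum_log_le_card_mul_log_sum_div {ι : Type*} [Fintype ι] [Nonempty ι] {μ : ι → ℝ}
    (hμ : ∀ i, 0 < μ i) :
    ∑ i, Real.log (μ i) ≤ Fintype.card ι * Real.log ((∑ i, μ i) / Fintype.card ι) := by
  have hcard : (0 : ℝ) < Fintype.card ι := by exact_mod_cast Fintype.card_pos
  have jensen := strictConcaveOn_log_Ioi.concaveOn.le_map_sum (t := univ)
    (w := fun _ ↦ (Fintype.card ι : ℝ)⁻¹) (p := μ) (fun _ _ ↦ by positivity)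
    (by simp [hcard.ne']) (fun i _ ↦ hμ i)
  simp only [smul_eq_mul, inv_mul_eq_div, ← sum_div] at jensen
  rwa [div_le_iff₀' hcard] at jensen

theorem Matrix.PosDef.log_det_le_card_mul_log_trace_div {n : Type*} [Fintype n] [DecidableEq n]
    [Nonempty n] {M : Matrix n n ℝ} (hM : M.PosDef) :
    Real.log M.det ≤ Fintype.card n * Real.log (M.trace / Fintype.card n) := by
  rw [hM.isHermitian.det_eq_prod_eigenvalues, hM.isHermitian.trace_eq_sum_eigenvalues]
  simp only [RCLike.ofReal_real_eq_id, id]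
  rw [Real.log_prod fun i _ ↦ (hM.eigenvalues_pos i).ne']
  exact Real.sum_log_le_card_mul_log_sum_div hM.eigenvalues_pos

theorem Matrix.det_add_vecMulVec {m α : Type*} [Fintype m] [DecidableEq m] [CommRing α]
    {A : Matrix m m α} (hA : IsUnit A.det) (u v : m → α) :
    (A + vecMulVec u v).det = A.det * (1 + v ⬝ᵥ (A⁻¹ *ᵥ u)) := by
  rw [vecMulVec_eq Unit, det_add_replicateCol_mul_replicateRow hA, det_unique (n := Unit),
    Matrix.mul_assoc, ← replicateCol_mulVec, add_apply, one_apply_eq,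
    replicateRow_mul_replicateCol_apply]

theorem Matrix.trace_eq_trace_zero_add_sum_dotProduct {n R : Type*} [Fintype n]
    [NonUnitalNonAssocRing R] {φ : ℕ → n → R} {V : ℕ → Matrix n n R} {T : ℕ}
    (hV : ∀ t < T, V (t + 1) = V t + vecMulVec (φ (t + 1)) (φ (t + 1))) :
    (V T).trace = (V 0).trace + ∑ t ∈ range T, φ (t + 1) ⬝ᵥ φ (t + 1) := by
  rw [← sub_eq_iff_eq_add', ← sum_range_sub (fun t ↦ (V t).trace)]
  refine sum_congr rfl fun t ht ↦ ?_
  rw [hV t (mem_range.1 ht), trace_add, trace_vecMulVec, add_sub_cancel_left]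

theorem Matrix.PosDef.log_det_add_vecMulVec_self {n : Type*} [Fintype n] [DecidableEq n]
    {A : Matrix n n ℝ} (hA : A.PosDef) (u : n → ℝ) :
    Real.log (A + vecMulVec u u).det = Real.log A.det + Real.log (1 + u ⬝ᵥ (A⁻¹ *ᵥ u)) := by
  have hquad : 0 ≤ u ⬝ᵥ (A⁻¹ *ᵥ u) := by
    simpa using hA.inv.posSemidef.dotProduct_mulVec_nonneg u
  rw [det_add_vecMulVec hA.det_pos.ne'.isUnit u u, Real.log_mul hA.det_pos.ne' (by positivity)]

section GramRecursion

variable {n : Type*} [Fintype n] {φ : ℕ → n → ℝ} {V : ℕ → Matrix n n ℝ} {T : ℕ}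

theorem Matrix.PosDef.of_add_vecMulVec_self (hV0 : (V 0).PosDef)
    (hV : ∀ t < T, V (t + 1) = V t + vecMulVec (φ (t + 1)) (φ (t + 1))) {t : ℕ} (ht : t ≤ T) :
    (V t).PosDef := by
  induction t with
  | zero => exact hV0
  | succ t ih =>
    rw [hV t ht]
    exact (ih (by omega)).add_posSemidef
      (by simpa using posSemidef_vecMulVec_self_star (φ (t + 1)))

theorem Matrix.PosDef.log_det_eq_log_det_zero_add_sum [DecidableEq n] (hV0 : (V 0).PosDef)
    (hV : ∀ t < T, V (t + 1) = V t + vecMulVec (φ (t + 1)) (φ (t + 1))) :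
    Real.log (V T).det =
      Real.log (V 0).det + ∑ t ∈ range T, Real.log (1 + φ (t + 1) ⬝ᵥ ((V t)⁻¹ *ᵥ φ (t + 1))) := by
  rw [← sub_eq_iff_eq_add', ← sum_range_sub (fun t ↦ Real.log (V t).det)]
  refine sum_congr rfl fun t ht ↦ ?_
  have ht : t < T := mem_range.1 ht
  rw [hV t ht, (hV0.of_add_vecMulVec_self hV ht.le).log_det_add_vecMulVec_self,
    add_sub_cancel_left]

end GramRecursion

theorem elliptical_potential_log (d T : ℕ) (hd : 0 < d) (L lam : ℝ) (hlam : 0 < lam)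
    (φ : ℕ → Fin d → ℝ) (hφ : ∀ t, φ t ⬝ᵥ φ t ≤ L ^ 2)
    (V : ℕ → Matrix (Fin d) (Fin d) ℝ)
    (hV0 : V 0 = lam • (1 : Matrix (Fin d) (Fin d) ℝ))
    (hVrec : ∀ t < T, V (t + 1) = V t + Matrix.vecMulVec (φ (t + 1)) (φ (t + 1))) :
    ∑ t ∈ Finset.range T, Real.log (1 + φ (t + 1) ⬝ᵥ ((V t)⁻¹ *ᵥ φ (t + 1))) ≤
      d * Real.log (lam + T * L ^ 2 / d) - d * Real.log lam := by
  have : Nonempty (Fin d) := ⟨⟨0, hd⟩⟩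
  have hd' : (0 : ℝ) < d := by exact_mod_cast hd
  have hV0pd : (V 0).PosDef := hV0 ▸ PosDef.one.smul hlam
  have hVTpd : (V T).PosDef := hV0pd.of_add_vecMulVec_self hVrec le_rfl
  have htrace : (V T).trace ≤ d * lam + T * L ^ 2 := by
    rw [trace_eq_trace_zero_add_sum_dotProduct hVrec, hV0, trace_smul, trace_one,
      Fintype.card_fin, smul_eq_mul, mul_comm]
    have := sum_le_sum fun t (_ : t ∈ range T) ↦ hφ (t + 1)
    simp only [sum_const, card_range, nsmul_eq_mul] at this
    linarith
  calc _ = Real.log (V T).det - d * Real.log lam := by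
        rw [hV0pd.log_det_eq_log_det_zero_add_sum hVrec, hV0, det_smul, det_one, mul_one,
          Fintype.card_fin, Real.log_pow]
        ring
    _ ≤ d * Real.log ((V T).trace / d) - d * Real.log lam := by
        gcongr
        simpa using hVTpd.log_det_le_card_mul_log_trace_div
    _ ≤ d * Real.log (lam + T * L ^ 2 / d) - d * Real.log lam := by
        gcongr
        · exact div_pos hVTpd.trace_pos hd'
        · rw [div_le_iff₀ hd', add_mul, div_mul_cancel₀ _ hd'.ne']
          linarith
end

section
/- Let λ > 0 and φ₁,…,φ_T ∈ ℝ^d with ‖φ_t‖₂² ≤ L². Define V₀ = λI and V_t = V_{t-1} + φ_t φ_tᵀ. Then ∑_{t=1}^T min{φ_tᵀ V_{t-1}⁻¹ φ_t, 1} ≤ 2d·log(λ + T L²/d) - 2d·log λ. -/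
/-!
Since `V_t = V_{t-1} + φ_t φ_tᵀ`, the matrix determinant lemma gives
`det V_t = det V_{t-1} · (1 + ‖φ_t‖²_{V_{t-1}⁻¹})`, so the sum of `log (1 + ‖φ_t‖²_{V_{t-1}⁻¹})`
telescopes to `log det V_T - d log λ`. AM-GM on the eigenvalues bounds `det V_T` by
`(tr V_T / d)^d ≤ (λ + T L² / d)^d`, and each summand `min {α, 1}` is at most `2 log (1 + α)`.
-/

open Finset Matrix

lemma Real.min_le_two_mul_log_one_add {x : ℝ} (hx : 0 ≤ x) : min x 1 ≤ 2 * Real.log (1 + x) := by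
  have hpos : 0 < 1 + x := by linarith
  calc min x 1 ≤ 2 * x / (1 + x) := by
        rw [le_div_iff₀ hpos]
        rcases le_total x 1 with h | h
        · rw [min_eq_left h]; nlinarith
        · rw [min_eq_right h]; linarith
    _ = 2 * (1 - (1 + x)⁻¹) := by field_simp; ring
    _ ≤ 2 * Real.log (1 + x) := by linarith [Real.one_sub_inv_le_log_of_pos hpos]

lemma Real.prod_le_sum_div_card_pow {ι : Type*} {s : Finset ι} (hs : s.Nonempty) {z : ι → ℝ}
    (hz : ∀ i ∈ s, 0 ≤ z i) : ∏ i ∈ s, z i ≤ ((∑ i ∈ s, z i) / #s) ^ #s := by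
  have hprod : 0 ≤ ∏ i ∈ s, z i := prod_nonneg hz
  have amgm := Real.geom_mean_le_arith_mean s (fun _ ↦ 1) z (fun _ _ ↦ zero_le_one)
    (by simpa using hs.card_pos) hz
  simp only [Real.rpow_one, one_mul, sum_const, nsmul_eq_mul, mul_one] at amgm
  calc ∏ i ∈ s, z i = ((∏ i ∈ s, z i) ^ ((#s : ℝ)⁻¹)) ^ #s :=
        (Real.rpow_inv_natCast_pow hprod hs.card_pos.ne').symm
    _ ≤ ((∑ i ∈ s, z i) / #s) ^ #s := pow_le_pow_left₀ (by positivity) amgm _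

namespace Matrix

variable {n : Type*} [Fintype n]

theorem det_add_vecMulVec_s7 [DecidableEq n] {R : Type*} [CommRing R] {A : Matrix n n R}
    (hA : IsUnit A.det) (u v : n → R) :
    (A + vecMulVec u v).det = A.det * (1 + v ⬝ᵥ (A⁻¹ *ᵥ u)) := by
  rw [vecMulVec_eq Unit, det_add_replicateCol_mul_replicateRow hA]
  congr 1
  rw [det_unique, add_apply, one_apply_eq, ← replicateRow_vecMul,
    replicateRow_mul_replicateCol_apply, dotProduct_mulVec]

theorem PosSemidef.det_le_trace_div_card_pow [DecidableEq n] [Nonempty n] {M : Matrix n n ℝ}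
    (hM : M.PosSemidef) : M.det ≤ (M.trace / Fintype.card n) ^ Fintype.card n := by
  rw [hM.isHermitian.det_eq_prod_eigenvalues, hM.isHermitian.trace_eq_sum_eigenvalues]
  simpa using Real.prod_le_sum_div_card_pow univ_nonempty fun i _ ↦ hM.eigenvalues_nonneg i

theorem PosDef.log_det_le_card_mul_log [DecidableEq n] [Nonempty n] {M : Matrix n n ℝ}
    (hM : M.PosDef) {c : ℝ} (hc : M.trace / Fintype.card n ≤ c) :
    Real.log M.det ≤ Fintype.card n * Real.log c := by
  have hmean : 0 ≤ M.trace / Fintype.card n :=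
    div_nonneg hM.posSemidef.trace_nonneg (by positivity)
  rw [← Real.log_pow]
  exact Real.log_le_log hM.det_pos
    (hM.posSemidef.det_le_trace_div_card_pow.trans (pow_le_pow_left₀ hmean hc _))

theorem PosDef.dotProduct_inv_mulVec_self_nonneg [DecidableEq n] {M : Matrix n n ℝ}
    (hM : M.PosDef) (x : n → ℝ) : 0 ≤ x ⬝ᵥ (M⁻¹ *ᵥ x) := by
  simpa using hM.inv.posSemidef.dotProduct_mulVec_nonneg x

variable {V : ℕ → Matrix n n ℝ} {φ : ℕ → n → ℝ} {T : ℕ}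

theorem posDef_of_rankOneUpdates (h0 : (V 0).PosDef)
    (hV : ∀ t < T, V (t + 1) = V t + vecMulVec (φ (t + 1)) (φ (t + 1))) :
    ∀ t ≤ T, (V t).PosDef := by
  intro t
  induction t with
  | zero => exact fun _ ↦ h0
  | succ t ih =>
    intro ht
    rw [hV t ht]
    simpa using (ih (by omega)).add_posSemidef (posSemidef_vecMulVec_self_star (φ (t + 1)))

theorem log_det_rankOneUpdates [DecidableEq n] (h0 : (V 0).PosDef)
    (hV : ∀ t < T, V (t + 1) = V t + vecMulVec (φ (t + 1)) (φ (t + 1))) :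
    ∀ t ≤ T, Real.log (V t).det = Real.log (V 0).det +
      ∑ s ∈ range t, Real.log (1 + φ (s + 1) ⬝ᵥ ((V s)⁻¹ *ᵥ φ (s + 1))) := by
  intro t
  induction t with
  | zero => simp
  | succ t ih =>
    intro ht
    have hVt := posDef_of_rankOneUpdates h0 hV t (by omega)
    have hquad := hVt.dotProduct_inv_mulVec_self_nonneg (φ (t + 1))
    rw [sum_range_succ, ← add_assoc, ← ih (by omega), hV t ht,
      det_add_vecMulVec_s7 hVt.det_pos.ne'.isUnit, Real.log_mul hVt.det_pos.ne' (by linarith)]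

theorem trace_rankOneUpdates_le {L : ℝ}
    (hV : ∀ t < T, V (t + 1) = V t + vecMulVec (φ (t + 1)) (φ (t + 1)))
    (hφ : ∀ t, φ t ⬝ᵥ φ t ≤ L ^ 2) : ∀ t ≤ T, (V t).trace ≤ (V 0).trace + t * L ^ 2 := by
  intro t
  induction t with
  | zero => simp
  | succ t ih =>
    intro ht
    rw [hV t ht, trace_add, trace_vecMulVec]
    push_cast
    linarith [ih (by omega), hφ (t + 1)]

end Matrix

theorem elliptical_potential_min (d T : ℕ) (hd : 0 < d) (L lam : ℝ) (hlam : 0 < lam)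
    (φ : ℕ → Fin d → ℝ) (hφ : ∀ t, φ t ⬝ᵥ φ t ≤ L ^ 2)
    (V : ℕ → Matrix (Fin d) (Fin d) ℝ)
    (hV0 : V 0 = lam • (1 : Matrix (Fin d) (Fin d) ℝ))
    (hVrec : ∀ t < T, V (t + 1) = V t + Matrix.vecMulVec (φ (t + 1)) (φ (t + 1))) :
    ∑ t ∈ Finset.range T, min (φ (t + 1) ⬝ᵥ ((V t)⁻¹ *ᵥ φ (t + 1))) 1 ≤
      2 * d * Real.log (lam + T * L ^ 2 / d) - 2 * d * Real.log lam := by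
  have h0 : (V 0).PosDef := by
    rw [hV0, smul_one_eq_diagonal]
    exact PosDef.diagonal fun _ ↦ hlam
  have hpos := posDef_of_rankOneUpdates h0 hVrec
  have hlogdet0 : Real.log (V 0).det = d * Real.log lam := by
    rw [hV0, det_smul, det_one, mul_one, Fintype.card_fin, Real.log_pow]
  have htrace : (V T).trace / d ≤ lam + T * L ^ 2 / d := by
    have := trace_rankOneUpdates_le hVrec hφ T le_rfl
    rw [hV0, trace_smul, trace_one, Fintype.card_fin, smul_eq_mul] at this
    rw [div_le_iff₀ (by positivity), add_mul, div_mul_cancel₀ _ (by positivity)]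
    linarith
  have hlogdetT : Real.log (V T).det ≤ d * Real.log (lam + T * L ^ 2 / d) := by
    have : Nonempty (Fin d) := ⟨⟨0, hd⟩⟩
    simpa using (hpos T le_rfl).log_det_le_card_mul_log (by simpa using htrace)
  calc ∑ t ∈ range T, min (φ (t + 1) ⬝ᵥ ((V t)⁻¹ *ᵥ φ (t + 1))) 1
      ≤ ∑ t ∈ range T, 2 * Real.log (1 + φ (t + 1) ⬝ᵥ ((V t)⁻¹ *ᵥ φ (t + 1))) :=
        sum_le_sum fun t ht ↦ Real.min_le_two_mul_log_one_add
          ((hpos t (mem_range.mp ht).le).dotProduct_inv_mulVec_self_nonneg _)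
    _ = 2 * (Real.log (V T).det - Real.log (V 0).det) := by
        rw [← mul_sum, log_det_rankOneUpdates h0 hVrec T le_rfl]; ring
    _ ≤ 2 * d * Real.log (lam + T * L ^ 2 / d) - 2 * d * Real.log lam := by
        rw [hlogdet0]; linarith
end
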